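/- arXiv:math/0603236 — 3 statements merged into one kernel-verified Lean document; each statement's English description precedes it below -/
import Mathlib

section
/- Let g : [0,∞) → ℝ be a nonnegative C¹ function satisfying the differential inequality g'(t) ≤ −γ(t)·g(t) + α(t)·g(t)² + β(t) for all t ≥ 0, where γ, α, β : [0,∞) → ℝ are nonnegative continuous functions. Suppose there exists a C¹ function μ : [0,∞) → ℝ with μ(t) > 0 for all t and μ(t) → ∞ as t → ∞, such that (i) α(t) ≤ (μ(t)/2)·(γ(t) − μ'(t)/μ(t)) for all t ≥ 0, (ii) β(t) ≤ (1/(2μ(t)))·(γ(t) − μ'(t)/μ(t)) for all t ≥ 0, and (iii) g(0)·μ(0) < 1. Then 0 ≤ g(t) < 1/μ(t) for all t ∈ [0,∞). -/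
/-! With `w = g μ`, conditions (i) and (ii) turn the differential inequality into
`w' ≤ c (1 - w)²` with the continuous coefficient `c = (γ - μ'/μ)/2`. On `[0, t]` we have
`c ≤ K`, so `w` stays below the solution `1 - u₀ / (1 + K u₀ s)`, `u₀ = 1 - w(0) > 0`, of the
Riccati equation `B' = K (1 - B)²`, and this solution never reaches `1`. -/

open Set Filter

lemma hasDerivAt_one_sub_div_one_add_mul {K u a x : ℝ} (hx : 1 + K * u * (x - a) ≠ 0) :
    HasDerivAt (fun y => 1 - u / (1 + K * u * (y - a)))
      (K * (u / (1 + K * u * (x - a))) ^ 2) x := by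
  have hD : HasDerivAt (fun y => 1 + K * u * (y - a)) (K * u) x := by
    simpa using (((hasDerivAt_id x).sub_const a).const_mul (K * u)).const_add 1
  have h := ((hD.inv hx).const_mul u).const_sub 1
  simp only [Pi.inv_apply, ← div_eq_mul_inv] at h
  exact h.congr_deriv (by field_simp)

lemma lt_one_of_deriv_le_const_mul_one_sub_sq {f f' : ℝ → ℝ} {a b K : ℝ}
    (hf : ContinuousOn f (Icc a b)) (hf' : ∀ x ∈ Ico a b, HasDerivWithinAt f (f' x) (Ici x) x)
    (bound : ∀ x ∈ Ico a b, f' x ≤ K * (1 - f x) ^ 2) (ha : f a < 1) :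
    ∀ x ∈ Icc a b, f x < 1 := by
  -- `L > max K 0` makes the derivative comparison strict where `f` touches the barrier.
  set L := max K 0 + 1
  set u := 1 - f a
  have hu : 0 < u := sub_pos.2 ha
  have hD : ∀ x, a ≤ x → 0 < 1 + L * u * (x - a) := fun x hx => by
    have : 0 ≤ L * u * (x - a) := by have := sub_nonneg.2 hx; positivity
    linarith
  set B : ℝ → ℝ := fun y => 1 - u / (1 + L * u * (y - a))
  have hB : ∀ x, a ≤ x → HasDerivAt B (L * (1 - B x) ^ 2) x := fun x hx => by
    simpa [B] using hasDerivAt_one_sub_div_one_add_mul (hD x hx).ne'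
  have hB_lt : ∀ x, a ≤ x → B x < 1 := fun x hx => by
    have := div_pos hu (hD x hx); simp only [B]; linarith
  have hfB : ∀ x ∈ Icc a b, f x ≤ B x := by
    refine image_le_of_deriv_right_lt_deriv_boundary' hf hf' (by simp [B, u])
      (fun x hx => (hB x hx.1).continuousAt.continuousWithinAt)
      (fun x hx => (hB x hx.1).hasDerivWithinAt) fun x hx hfx => ?_
    have hpos : 0 < (1 - B x) ^ 2 := by have := hB_lt x hx.1; positivity
    calc f' x ≤ K * (1 - f x) ^ 2 := bound x hx
      _ ≤ max K 0 * (1 - B x) ^ 2 := by rw [hfx]; gcongr; exact le_max_left _ _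
      _ < L * (1 - B x) ^ 2 := by gcongr; linarith
  exact fun x hx => (hfB x hx).trans_lt (hB_lt x hx.1)

lemma lt_one_of_deriv_le_mul_one_sub_sq {f f' c : ℝ → ℝ} {a b : ℝ}
    (hc : ContinuousOn c (Icc a b))
    (hf : ContinuousOn f (Icc a b)) (hf' : ∀ x ∈ Ico a b, HasDerivWithinAt f (f' x) (Ici x) x)
    (bound : ∀ x ∈ Ico a b, f' x ≤ c x * (1 - f x) ^ 2) (ha : f a < 1) :
    ∀ x ∈ Icc a b, f x < 1 := by
  obtain ⟨K, hK⟩ := (isCompact_Icc.bddAbove_image hc : BddAbove (c '' Icc a b))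
  refine lt_one_of_deriv_le_const_mul_one_sub_sq hf hf' (K := K) (fun x hx => ?_) ha
  exact (bound x hx).trans (by gcongr; exact hK (mem_image_of_mem c (Ico_subset_Icc_self hx)))

lemma mul_deriv_le_of_riccati_bounds {g g' γ α β μ μ' : ℝ} (hμ : 0 < μ)
    (hineq : g' ≤ -γ * g + α * g ^ 2 + β)
    (hα : α ≤ μ / 2 * (γ - μ' / μ)) (hβ : β ≤ 1 / (2 * μ) * (γ - μ' / μ)) :
    g' * μ + g * μ' ≤ (γ - μ' / μ) / 2 * (1 - g * μ) ^ 2 := by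
  set s := γ - μ' / μ
  have hμ' : μ' = μ * (γ - s) := by simp only [s]; field_simp; ring
  have hβ' : μ * β ≤ s / 2 := by
    calc μ * β ≤ μ * (1 / (2 * μ) * s) := by gcongr
      _ = s / 2 := by field_simp
  have hα' : μ * α * g ^ 2 ≤ μ ^ 2 * g ^ 2 * s / 2 := by
    have := mul_le_mul_of_nonneg_left hα (by positivity : 0 ≤ μ * g ^ 2)
    linarith
  rw [hμ']
  nlinarith [mul_le_mul_of_nonneg_left hineq hμ.le]

theorem stmt_0_general (g g' gam alpha beta mu mu' : ℝ → ℝ)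
    (hg_deriv : ∀ t ∈ Ici (0:ℝ), HasDerivAt g (g' t) t)
    (hg_nonneg : ∀ t ∈ Ici (0:ℝ), 0 ≤ g t)
    (hgam_cont : ContinuousOn gam (Ici 0))
    (hineq : ∀ t ∈ Ici (0:ℝ), g' t ≤ -gam t * g t + alpha t * (g t) ^ 2 + beta t)
    (hmu_deriv : ∀ t ∈ Ici (0:ℝ), HasDerivAt mu (mu' t) t)
    (hmu'_cont : ContinuousOn mu' (Ici 0))
    (hmu_pos : ∀ t ∈ Ici (0:ℝ), 0 < mu t)
    (hi : ∀ t ∈ Ici (0:ℝ), alpha t ≤ (mu t / 2) * (gam t - mu' t / mu t))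
    (hii : ∀ t ∈ Ici (0:ℝ), beta t ≤ (1 / (2 * mu t)) * (gam t - mu' t / mu t))
    (hiii : g 0 * mu 0 < 1) :
    ∀ t ∈ Ici (0:ℝ), 0 ≤ g t ∧ g t < 1 / mu t := by
  have hw : ∀ t ∈ Ici (0:ℝ), HasDerivAt (fun x => g x * mu x) (g' t * mu t + g t * mu' t) t :=
    fun t ht => (hg_deriv t ht).mul (hmu_deriv t ht)
  have hmu_cont : ContinuousOn mu (Ici 0) := fun t ht =>
    (hmu_deriv t ht).continuousAt.continuousWithinAt
  have hc : ContinuousOn (fun x => (gam x - mu' x / mu x) / 2) (Ici 0) :=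
    (hgam_cont.sub (hmu'_cont.div hmu_cont fun t ht => (hmu_pos t ht).ne')).div_const 2
  intro t ht
  refine ⟨hg_nonneg t ht, (lt_div_iff₀ (hmu_pos t ht)).2 ?_⟩
  refine lt_one_of_deriv_le_mul_one_sub_sq (hc.mono Icc_subset_Ici_self)
    (fun x hx => (hw x hx.1).continuousAt.continuousWithinAt)
    (fun x hx => (hw x hx.1).hasDerivWithinAt)
    (fun x hx => mul_deriv_le_of_riccati_bounds (hmu_pos x hx.1) (hineq x hx.1) (hi x hx.1)
      (hii x hx.1)) hiii t ⟨ht, le_rfl⟩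

/-- Lemma 1 (Ramm): a nonlinear differential inequality.  If a nonnegative `C¹`
function `g` on `[0,∞)` satisfies `g' ≤ -γ g + α g² + β` with nonnegative
continuous coefficients, and there is a positive `C¹` function `μ → ∞` with
`α ≤ (μ/2)(γ - μ'/μ)`, `β ≤ (1/(2μ))(γ - μ'/μ)` and `g(0)μ(0) < 1`, then
`0 ≤ g(t) < 1/μ(t)` for all `t ≥ 0`. -/
theorem stmt_0 (g g' gam alpha beta mu mu' : ℝ → ℝ)
    (hg_deriv : ∀ t ∈ Ici (0:ℝ), HasDerivAt g (g' t) t)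
    (hg'_cont : ContinuousOn g' (Ici 0))
    (hg_nonneg : ∀ t ∈ Ici (0:ℝ), 0 ≤ g t)
    (hgam_cont : ContinuousOn gam (Ici 0))
    (hgam_nonneg : ∀ t ∈ Ici (0:ℝ), 0 ≤ gam t)
    (halpha_cont : ContinuousOn alpha (Ici 0))
    (halpha_nonneg : ∀ t ∈ Ici (0:ℝ), 0 ≤ alpha t)
    (hbeta_cont : ContinuousOn beta (Ici 0))
    (hbeta_nonneg : ∀ t ∈ Ici (0:ℝ), 0 ≤ beta t)
    (hineq : ∀ t ∈ Ici (0:ℝ), g' t ≤ -gam t * g t + alpha t * (g t) ^ 2 + beta t)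
    (hmu_deriv : ∀ t ∈ Ici (0:ℝ), HasDerivAt mu (mu' t) t)
    (hmu'_cont : ContinuousOn mu' (Ici 0))
    (hmu_pos : ∀ t ∈ Ici (0:ℝ), 0 < mu t)
    (hmu_inf : Tendsto mu atTop atTop)
    (hi : ∀ t ∈ Ici (0:ℝ), alpha t ≤ (mu t / 2) * (gam t - mu' t / mu t))
    (hii : ∀ t ∈ Ici (0:ℝ), beta t ≤ (1 / (2 * mu t)) * (gam t - mu' t / mu t))
    (hiii : g 0 * mu 0 < 1) :
    ∀ t ∈ Ici (0:ℝ), 0 ≤ g t ∧ g t < 1 / mu t :=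
  stmt_0_general g g' gam alpha beta mu mu' hg_deriv hg_nonneg hgam_cont hineq hmu_deriv hmu'_cont
    hmu_pos hi hii hiii
end

section
/- Let H be a real Hilbert space and let A, Ã : H → H be bounded linear operators with ‖A‖ ≤ M₁ and ‖Ã‖ ≤ M₁. Set T := A*A and T̃ := Ã*Ã. Then for every a > 0, a·‖((T + aI)⁻¹ − (T̃ + aI)⁻¹)·T̃‖ ≤ 2·M₁·‖A − Ã‖. -/
/-! With `R_T := (T + a)⁻¹`, the resolvent identity gives
`(R_T - R_T') T' = R_T (T' - T) (R_T' T')`. For accretive `T`,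
`‖(T + a) x‖² = ‖T x‖² + 2a⟪T x, x⟫ + a²‖x‖²` yields `‖R_T‖ ≤ 1/a` and `‖R_T T‖ ≤ 1`, so
`a ‖(R_T - R_T') T'‖ ≤ ‖T - T'‖`. For `T = A*A`, `T' = B*B` the splitting
`A*A - B*B = A*(A - B) + (A - B)*B` bounds `‖T - T'‖` by `(‖A‖ + ‖B‖) ‖A - B‖`. -/

open ContinuousLinearMap
open scoped InnerProduct RealInnerProductSpace

theorem Commute.ringInverse_right {M₀ : Type*} [MonoidWithZero M₀] {a b : M₀}
    (h : Commute a b) : Commute a (Ring.inverse b) := by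
  by_cases hb : IsUnit b
  · obtain ⟨u, rfl⟩ := hb
    rw [Ring.inverse_unit]
    exact h.units_inv_right
  · rw [Ring.inverse_non_unit b hb]
    exact Commute.zero_right a

namespace ContinuousLinearMap

section Normed

variable {𝕜 E : Type*} [NontriviallyNormedField 𝕜] [NormedAddCommGroup E] [NormedSpace 𝕜 E]

theorem norm_mul_ringInverse_le {R S : E →L[𝕜] E} (hS : IsUnit S) {C : ℝ} (hC : 0 ≤ C)
    (h : ∀ x, ‖R x‖ ≤ C * ‖S x‖) : ‖R * Ring.inverse S‖ ≤ C := by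
  refine opNorm_le_bound _ hC fun y => ?_
  have hy : S (Ring.inverse S y) = y := by
    rw [← mul_apply_eq_comp, Ring.mul_inverse_cancel S hS, one_apply_eq_self]
  simpa only [mul_apply_eq_comp, hy] using h (Ring.inverse S y)

end Normed

section Adjoint

variable {𝕜 E F : Type*} [RCLike 𝕜] [NormedAddCommGroup E] [InnerProductSpace 𝕜 E]
  [CompleteSpace E] [NormedAddCommGroup F] [InnerProductSpace 𝕜 F] [CompleteSpace F]

theorem norm_adjoint_comp_self_sub_le (A B : E →L[𝕜] F) :
    ‖A† ∘L A - B† ∘L B‖ ≤ (‖A‖ + ‖B‖) * ‖A - B‖ := by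
  have hsplit : A† ∘L A - B† ∘L B = A† ∘L (A - B) + (A - B)† ∘L B := by
    rw [map_sub, comp_sub, sub_comp]; abel
  calc ‖A† ∘L A - B† ∘L B‖ ≤ ‖A†‖ * ‖A - B‖ + ‖(A - B)†‖ * ‖B‖ := by
        rw [hsplit]
        exact (norm_add_le _ _).trans (add_le_add (opNorm_comp_le _ _) (opNorm_comp_le _ _))
    _ = (‖A‖ + ‖B‖) * ‖A - B‖ := by rw [adjoint.norm_map, adjoint.norm_map]; ring

end Adjoint

variable {H : Type*} [NormedAddCommGroup H] [InnerProductSpace ℝ H]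

theorem norm_add_smul_one_apply_sq (T : H →L[ℝ] H) (a : ℝ) (x : H) :
    ‖(T + a • 1) x‖ ^ 2 = ‖T x‖ ^ 2 + 2 * a * ⟪T x, x⟫ + a ^ 2 * ‖x‖ ^ 2 := by
  rw [add_apply, smul_apply, one_apply_eq_self, norm_add_sq_real, real_inner_smul_right, norm_smul,
    mul_pow, Real.norm_eq_abs, sq_abs]
  ring

variable {T : H →L[ℝ] H} {a : ℝ}

theorem norm_le_inv_mul_norm_add_smul_one_apply (hT : ∀ x, 0 ≤ ⟪T x, x⟫) (ha : 0 < a)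
    (x : H) : ‖x‖ ≤ a⁻¹ * ‖(T + a • 1) x‖ := by
  rw [le_inv_mul_iff₀ ha, ← sq_le_sq₀ (by positivity) (norm_nonneg _),
    norm_add_smul_one_apply_sq]
  nlinarith [hT x, sq_nonneg ‖T x‖]

theorem norm_apply_le_norm_add_smul_one_apply (hT : ∀ x, 0 ≤ ⟪T x, x⟫) (ha : 0 ≤ a)
    (x : H) : ‖T x‖ ≤ ‖(T + a • 1) x‖ := by
  rw [← sq_le_sq₀ (norm_nonneg _) (norm_nonneg _), norm_add_smul_one_apply_sq]
  nlinarith [hT x, sq_nonneg (a * ‖x‖)]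

variable [CompleteSpace H]

theorem isUnit_add_smul_one (hT : ∀ x, 0 ≤ ⟪T x, x⟫) (ha : 0 < a) : IsUnit (T + a • 1) := by
  refine isUnit_of_forall_le_norm_inner_map _ (c := ⟨a, ha.le⟩) ha fun x => ?_
  rw [add_apply, smul_apply, one_apply_eq_self, inner_add_left, real_inner_smul_left,
    real_inner_self_eq_norm_sq, Real.norm_eq_abs, abs_of_nonneg (by nlinarith [hT x])]
  change ‖x‖ ^ 2 * a ≤ _
  linarith [hT x]

theorem norm_ringInverse_add_smul_one_le (hT : ∀ x, 0 ≤ ⟪T x, x⟫) (ha : 0 < a) :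
    ‖Ring.inverse (T + a • 1)‖ ≤ a⁻¹ := by
  simpa using norm_mul_ringInverse_le (R := 1) (isUnit_add_smul_one hT ha) (inv_nonneg.2 ha.le)
    fun x => by simpa using norm_le_inv_mul_norm_add_smul_one_apply hT ha x

theorem norm_ringInverse_add_smul_one_mul_le_one (hT : ∀ x, 0 ≤ ⟪T x, x⟫) (ha : 0 < a) :
    ‖Ring.inverse (T + a • 1) * T‖ ≤ 1 := by
  have hcomm : Commute T (T + a • 1) :=
    (Commute.refl T).add_right ((Commute.one_right T).smul_right a)
  rw [← hcomm.ringInverse_right.eq]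
  exact norm_mul_ringInverse_le (isUnit_add_smul_one hT ha) zero_le_one
    fun x => by simpa using norm_apply_le_norm_add_smul_one_apply hT ha.le x

theorem mul_norm_ringInverse_add_smul_one_sub_mul_le (hT : ∀ x, 0 ≤ ⟪T x, x⟫) {T' : H →L[ℝ] H}
    (hT' : ∀ x, 0 ≤ ⟪T' x, x⟫) (ha : 0 < a) :
    a * ‖(Ring.inverse (T + a • 1) - Ring.inverse (T' + a • 1)) * T'‖ ≤ ‖T - T'‖ := by
  set R := Ring.inverse (T + a • 1)
  set R' := Ring.inverse (T' + a • 1)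
  have hresolvent : (R - R') * T' = R * (T' - T) * (R' * T') := by
    rw [Ring.inverse_sub_inverse (iff_of_true (isUnit_add_smul_one hT ha)
      (isUnit_add_smul_one hT' ha)), add_sub_add_right_eq_sub, mul_assoc _ R']
  calc a * ‖(R - R') * T'‖ ≤ a * (‖R‖ * ‖T' - T‖ * ‖R' * T'‖) := by
        rw [hresolvent]; gcongr; exact norm_mul₃_le
    _ ≤ a * (a⁻¹ * ‖T' - T‖ * 1) := by
        gcongr
        · exact norm_ringInverse_add_smul_one_le hT ha
        · exact norm_ringInverse_add_smul_one_mul_le_one hT' ha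
    _ = ‖T - T'‖ := by rw [mul_one, ← mul_assoc, mul_inv_cancel₀ ha.ne', one_mul, norm_sub_rev]

end ContinuousLinearMap

theorem stmt_5_general {H : Type*} [NormedAddCommGroup H] [InnerProductSpace ℝ H]
    [CompleteSpace H] (A B : H →L[ℝ] H) (M₁ : ℝ)
    (hA : ‖A‖ ≤ M₁) (hB : ‖B‖ ≤ M₁) (a : ℝ) (ha : 0 < a) :
    a * ‖(Ring.inverse (ContinuousLinearMap.adjoint A * A + a • (1 : H →L[ℝ] H)) -
          Ring.inverse (ContinuousLinearMap.adjoint B * B + a • (1 : H →L[ℝ] H))) *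
          (ContinuousLinearMap.adjoint B * B)‖ ≤ 2 * M₁ * ‖A - B‖ := by
  have hpos (C : H →L[ℝ] H) (x : H) : 0 ≤ ⟪(adjoint C * C) x, x⟫ := by
    rw [mul_apply_eq_comp, adjoint_inner_left]
    exact real_inner_self_nonneg
  calc _ ≤ ‖adjoint A * A - adjoint B * B‖ :=
        mul_norm_ringInverse_add_smul_one_sub_mul_le (hpos A) (hpos B) ha
    _ ≤ (‖A‖ + ‖B‖) * ‖A - B‖ := norm_adjoint_comp_self_sub_le A B
    _ ≤ 2 * M₁ * ‖A - B‖ := by rw [two_mul]; gcongr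

/-- For bounded linear operators `A`, `B` on a real Hilbert space with
`‖A‖ ≤ M₁`, `‖B‖ ≤ M₁`, `T := A*A`, `T̃ := B*B`, and any `a > 0`,
`a‖((T + aI)⁻¹ − (T̃ + aI)⁻¹) T̃‖ ≤ 2 M₁ ‖A − B‖`. -/
theorem stmt_5 {H : Type*} [NormedAddCommGroup H] [InnerProductSpace ℝ H]
    [CompleteSpace H] (A B : H →L[ℝ] H) (M₁ : ℝ) (hM₁ : 0 < M₁)
    (hA : ‖A‖ ≤ M₁) (hB : ‖B‖ ≤ M₁) (a : ℝ) (ha : 0 < a) :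
    a * ‖(Ring.inverse (ContinuousLinearMap.adjoint A * A + a • (1 : H →L[ℝ] H)) -
          Ring.inverse (ContinuousLinearMap.adjoint B * B + a • (1 : H →L[ℝ] H))) *
          (ContinuousLinearMap.adjoint B * B)‖ ≤ 2 * M₁ * ‖A - B‖ :=
  stmt_5_general A B M₁ hA hB a ha
end

section
/- Let H be a real Hilbert space, u₀ ∈ H, R > 0, and let F : H → H be twice continuously Fréchet differentiable on the ball B(u₀,R) with ‖F'(u)‖ ≤ M₁ and ‖F''(u)‖ ≤ M₂ for all u ∈ B(u₀,R). Let y ∈ B(u₀,R), f := F(y), and let f_δ ∈ H with ‖f_δ − f‖ ≤ δ, δ > 0. Set T̃ := F'(y)*F'(y), c₀ := M₂/4, and let v ∈ H satisfy 2·M₁·M₂·‖v‖ ≤ 1/2; set z := y − T̃v. Let a : [0,∞) → ℝ satisfy a(t) > 0 for all t. Suppose u_δ : [0,∞) → H is differentiable and, writing A(t) := F'(u_δ(t)) and T(t) := A(t)*A(t), satisfies u_δ'(t) = −(T(t) + a(t)I)⁻¹·[A(t)*(F(u_δ(t)) − f_δ) + a(t)(u_δ(t) − z)] for all t with u_δ(t)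 ∈ B(u₀,R). Then for every such t, writing w(t) := u_δ(t) − y, the inequality ⟨u_δ'(t), w(t)⟩ ≤ −‖w(t)‖²/2 + c₀·‖w(t)‖³/√(a(t)) + a(t)·‖v‖·‖w(t)‖ + δ·‖w(t)‖/(2√(a(t))) holds. -/
open Set Metric RealInnerProductSpace ContinuousLinearMap

/-! Writing `F(u_δ) - f_δ = A w + e`, with `e` the Taylor remainder plus the noise, the
right-hand side of the flow becomes `-(w + (T + a)⁻¹ A* e + a (T + a)⁻¹ T̃ v)`. Pairing
`(A*A + a) p = x` with `p` gives `‖(T + a)⁻¹ A*‖ ≤ 1/(2√a)` (AM-GM) and `‖(T + a)⁻¹ T‖ ≤ 1`,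
which bound the data term and the `T`-part of the source term; the rest of the source term
is at most `‖T̃ - T‖ ‖v‖ ≤ 2 M₁ M₂ ‖w‖ ‖v‖ ≤ ‖w‖²/2` by the smallness of `v`. -/

section Taylor

variable {E G : Type*} [NormedAddCommGroup E] [NormedSpace ℝ E]
  [NormedAddCommGroup G] [NormedSpace ℝ G]

theorem Convex.norm_sub_sub_fderiv_le_of_lipschitz {s : Set E} (hs : Convex ℝ s)
    {f : E → G} {f' : E → E →L[ℝ] G} (hf : ∀ x ∈ s, HasFDerivAt f (f' x) x) {M : ℝ}
    (hlip : ∀ x ∈ s, ∀ x' ∈ s, ‖f' x - f' x'‖ ≤ M * ‖x - x'‖)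
    {p q : E} (hp : p ∈ s) (hq : q ∈ s) :
    ‖f q - f p - f' p (q - p)‖ ≤ M / 2 * ‖q - p‖ ^ 2 := by
  set d := q - p
  set g : ℝ → G := fun r => f (p + r • d) - f p - r • f' p d with hg
  have hmem : ∀ r ∈ Icc (0 : ℝ) 1, p + r • d ∈ s := fun r hr => hs.add_smul_sub_mem hp hq hr
  have hderiv : ∀ r ∈ Icc (0 : ℝ) 1, HasDerivAt g (f' (p + r • d) d - f' p d) r := by
    intro r hr
    have hline : HasDerivAt (fun r : ℝ => p + r • d) d r := by
      simpa using ((hasDerivAt_id r).smul_const d).const_add p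
    exact (((hf _ (hmem r hr)).comp_hasDerivAt r hline).sub_const (f p)).sub
      (by simpa using (hasDerivAt_id r).smul_const (f' p d))
  have hderiv_le : ∀ r ∈ Ico (0 : ℝ) 1, ‖f' (p + r • d) d - f' p d‖ ≤ M * ‖d‖ ^ 2 * r := by
    intro r hr
    have hlip_r : ‖f' (p + r • d) - f' p‖ ≤ M * (r * ‖d‖) := by
      simpa [norm_smul, abs_of_nonneg hr.1] using hlip _ (hmem r ⟨hr.1, hr.2.le⟩) _ hp
    calc ‖f' (p + r • d) d - f' p d‖ = ‖(f' (p + r • d) - f' p) d‖ := by rw [sub_apply]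
      _ ≤ ‖f' (p + r • d) - f' p‖ * ‖d‖ := le_opNorm _ d
      _ ≤ M * (r * ‖d‖) * ‖d‖ := by gcongr
      _ = M * ‖d‖ ^ 2 * r := by ring
  have hbound : ∀ r : ℝ, HasDerivAt (fun r : ℝ => M * ‖d‖ ^ 2 / 2 * r ^ 2) (M * ‖d‖ ^ 2 * r) r :=
    fun r => ((hasDerivAt_pow 2 r).const_mul (M * ‖d‖ ^ 2 / 2)).congr_deriv (by push_cast; ring)
  have key := image_norm_le_of_norm_deriv_right_le_deriv_boundary
    (fun r hr => (hderiv r hr).continuousAt.continuousWithinAt)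
    (fun r hr => (hderiv r ⟨hr.1, hr.2.le⟩).hasDerivWithinAt)
    (B := fun r => M * ‖d‖ ^ 2 / 2 * r ^ 2) (by simp [hg]) hbound hderiv_le
    (x := 1) ⟨zero_le_one, le_rfl⟩
  calc ‖f q - f p - f' p d‖ = ‖g 1‖ := by simp [hg, d]
    _ ≤ M * ‖d‖ ^ 2 / 2 * 1 ^ 2 := key
    _ = M / 2 * ‖d‖ ^ 2 := by ring

end Taylor

section Tikhonov

variable {H : Type*} [NormedAddCommGroup H] [InnerProductSpace ℝ H] [CompleteSpace H]

theorem norm_adjoint_mul_self_sub_le (A B : H →L[ℝ] H) :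
    ‖adjoint B * B - adjoint A * A‖ ≤ (‖A‖ + ‖B‖) * ‖B - A‖ := by
  have hsplit : adjoint B * B - adjoint A * A = adjoint (B - A) * B + adjoint A * (B - A) := by
    rw [map_sub]; noncomm_ring
  calc ‖adjoint B * B - adjoint A * A‖
      ≤ ‖adjoint (B - A)‖ * ‖B‖ + ‖adjoint A‖ * ‖B - A‖ := by
        rw [hsplit]; exact (norm_add_le _ _).trans (add_le_add (norm_mul_le _ _) (norm_mul_le _ _))
    _ = (‖A‖ + ‖B‖) * ‖B - A‖ := by rw [adjoint.norm_map, adjoint.norm_map]; ring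

variable (A : H →L[ℝ] H) {α : ℝ}

noncomputable def tikhonovOp (A : H →L[ℝ] H) (α : ℝ) : H →L[ℝ] H := adjoint A * A + α • 1

theorem tikhonovOp_apply (x : H) : tikhonovOp A α x = adjoint A (A x) + α • x := rfl

theorem inner_tikhonovOp_apply_self (x : H) :
    ⟪tikhonovOp A α x, x⟫ = ‖A x‖ ^ 2 + α * ‖x‖ ^ 2 := by
  rw [tikhonovOp_apply, inner_add_left, adjoint_inner_left, real_inner_smul_left,
    real_inner_self_eq_norm_sq, real_inner_self_eq_norm_sq]

theorem isUnit_tikhonovOp (hα : 0 < α) : IsUnit (tikhonovOp A α) := by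
  refine isUnit_of_forall_le_norm_inner_map _ (c := ⟨α, hα.le⟩) hα fun x => ?_
  rw [inner_tikhonovOp_apply_self, Real.norm_of_nonneg (by positivity)]
  change ‖x‖ ^ 2 * α ≤ _
  nlinarith [sq_nonneg ‖A x‖]

theorem tikhonovOp_ringInverse_apply (hα : 0 < α) (x : H) :
    tikhonovOp A α (Ring.inverse (tikhonovOp A α) x) = x := by
  rw [← mul_apply_eq_comp, Ring.mul_inverse_cancel _ (isUnit_tikhonovOp A hα), one_apply_eq_self]

theorem ringInverse_tikhonovOp_apply (hα : 0 < α) (x : H) :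
    Ring.inverse (tikhonovOp A α) (tikhonovOp A α x) = x := by
  rw [← mul_apply_eq_comp, Ring.inverse_mul_cancel _ (isUnit_tikhonovOp A hα), one_apply_eq_self]

variable {A}

theorem mul_norm_le_of_tikhonovOp_apply_eq (hα : 0 < α) {p x : H} (h : tikhonovOp A α p = x) :
    α * ‖p‖ ≤ ‖x‖ := by
  have hinner := inner_tikhonovOp_apply_self A (α := α) p
  rw [h] at hinner
  have hCS := real_inner_le_norm x p
  nlinarith [sq_nonneg ‖A p‖, norm_nonneg p, norm_nonneg x, sq_nonneg (‖x‖ - α * ‖p‖)]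

/-- By AM-GM, `2√α ‖p‖ ‖A p‖ ≤ ‖A p‖² + α ‖p‖² = ⟪g, A p⟫`. -/
theorem two_sqrt_mul_norm_le_of_tikhonovOp_apply_eq_adjoint (hα : 0 < α) {p g : H}
    (h : tikhonovOp A α p = adjoint A g) : 2 * √α * ‖p‖ ≤ ‖g‖ := by
  have hinner := inner_tikhonovOp_apply_self A (α := α) p
  rw [h, adjoint_inner_left] at hinner
  have hCS : ‖A p‖ ^ 2 + α * ‖p‖ ^ 2 ≤ ‖g‖ * ‖A p‖ := hinner ▸ real_inner_le_norm g (A p)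
  have hsq : √α ^ 2 = α := Real.sq_sqrt hα.le
  rcases (norm_nonneg (A p)).eq_or_lt with hAp | hAp
  · rw [← hAp] at hCS
    have hp : p = 0 := by
      by_contra hp
      linarith [mul_pos hα (pow_pos (norm_pos_iff.2 hp) 2)]
    simp [hp]
  · nlinarith [sq_nonneg (‖A p‖ - √α * ‖p‖), norm_nonneg p, Real.sqrt_nonneg α]

/-- With `q := x - p` one has `(A* A + α) q = α x`, so `⟪x, q⟫ ≥ ‖q‖²` and
`‖p‖² = ‖x‖² - 2⟪x, q⟫ + ‖q‖² ≤ ‖x‖²`. -/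
theorem norm_le_of_tikhonovOp_apply_eq_adjoint_mul_self (hα : 0 < α) {p x : H}
    (h : tikhonovOp A α p = (adjoint A * A) x) : ‖p‖ ≤ ‖x‖ := by
  have hq : tikhonovOp A α (x - p) = α • x := by
    rw [map_sub, h, tikhonovOp_apply, mul_apply_eq_comp]; abel
  have hinner := inner_tikhonovOp_apply_self A (α := α) (x - p)
  rw [hq, real_inner_smul_left] at hinner
  have hexpand : ‖p‖ ^ 2 = ‖x‖ ^ 2 - 2 * ⟪x, x - p⟫ + ‖x - p‖ ^ 2 := by
    rw [← norm_sub_sq_real, sub_sub_cancel]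
  have hsq : ‖p‖ ^ 2 ≤ ‖x‖ ^ 2 := by
    nlinarith [sq_nonneg ‖A (x - p)‖, sq_nonneg ‖x - p‖]
  exact pow_le_pow_iff_left₀ (norm_nonneg _) (norm_nonneg _) two_ne_zero |>.mp hsq

theorem mul_norm_ringInverse_tikhonovOp_adjoint_mul_self_le (hα : 0 < α) (B : H →L[ℝ] H)
    (v : H) : α * ‖Ring.inverse (tikhonovOp A α) ((adjoint B * B) v)‖
      ≤ α * ‖v‖ + ‖adjoint B * B - adjoint A * A‖ * ‖v‖ := by
  set S := Ring.inverse (tikhonovOp A α)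
  have hsplit : S ((adjoint B * B) v)
      = S ((adjoint A * A) v) + S ((adjoint B * B - adjoint A * A) v) := by
    rw [← map_add, sub_apply, add_sub_cancel]
  have hmain : ‖S ((adjoint A * A) v)‖ ≤ ‖v‖ :=
    norm_le_of_tikhonovOp_apply_eq_adjoint_mul_self hα (tikhonovOp_ringInverse_apply A hα _)
  have hrest :
      α * ‖S ((adjoint B * B - adjoint A * A) v)‖ ≤ ‖adjoint B * B - adjoint A * A‖ * ‖v‖ :=
    (mul_norm_le_of_tikhonovOp_apply_eq hα (tikhonovOp_ringInverse_apply A hα _)).trans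
      (le_opNorm _ _)
  calc α * ‖S ((adjoint B * B) v)‖
      ≤ α * ‖S ((adjoint A * A) v)‖ + α * ‖S ((adjoint B * B - adjoint A * A) v)‖ := by
        rw [hsplit, ← mul_add]; exact mul_le_mul_of_nonneg_left (norm_add_le _ _) hα.le
    _ ≤ α * ‖v‖ + ‖adjoint B * B - adjoint A * A‖ * ‖v‖ := by gcongr

/-- `A` is the derivative at the current point, `B` the one at the solution `y`, and `e` the
remainder `F(u_δ) - f_δ - A w`. -/
theorem inner_neg_ringInverse_tikhonovOp_le {B : H →L[ℝ] H} {w e v : H} {M₁ M₂ δ : ℝ}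
    (hα : 0 < α) (hA : ‖A‖ ≤ M₁) (hB : ‖B‖ ≤ M₁) (hBA : ‖B - A‖ ≤ M₂ * ‖w‖)
    (he : ‖e‖ ≤ M₂ / 2 * ‖w‖ ^ 2 + δ) (hv : 2 * M₁ * M₂ * ‖v‖ ≤ 1 / 2) :
    ⟪-Ring.inverse (tikhonovOp A α) (tikhonovOp A α w + adjoint A e + α • (adjoint B * B) v), w⟫
      ≤ -‖w‖ ^ 2 / 2 + M₂ / 4 * ‖w‖ ^ 3 / √α + α * ‖v‖ * ‖w‖ + δ * ‖w‖ / (2 * √α) := by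
  set S := Ring.inverse (tikhonovOp A α)
  have hsqrt : 0 < √α := Real.sqrt_pos.mpr hα
  have hdata : 2 * √α * ‖S (adjoint A e)‖ ≤ M₂ / 2 * ‖w‖ ^ 2 + δ :=
    (two_sqrt_mul_norm_le_of_tikhonovOp_apply_eq_adjoint hα
      (tikhonovOp_ringInverse_apply A hα _)).trans he
  have hsource : α * ‖S ((adjoint B * B) v)‖ ≤ α * ‖v‖ + 2 * M₁ * M₂ * ‖w‖ * ‖v‖ := by
    refine (mul_norm_ringInverse_tikhonovOp_adjoint_mul_self_le hα B v).trans ?_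
    have hM₁ : 0 ≤ M₁ := (norm_nonneg A).trans hA
    have := (norm_adjoint_mul_self_sub_le A B).trans
      (mul_le_mul (add_le_add hA hB) hBA (norm_nonneg _) (by linarith))
    nlinarith [norm_nonneg v]
  have hinner : ⟪-S (tikhonovOp A α w + adjoint A e + α • (adjoint B * B) v), w⟫
      = -‖w‖ ^ 2 - ⟪S (adjoint A e), w⟫ - α * ⟪S ((adjoint B * B) v), w⟫ := by
    rw [map_add, map_add, map_smul, ringInverse_tikhonovOp_apply A hα]
    simp only [inner_neg_left, inner_add_left, real_inner_smul_left, real_inner_self_eq_norm_sq]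
    ring
  have hdata_w : -⟪S (adjoint A e), w⟫ ≤ (M₂ / 2 * ‖w‖ ^ 2 + δ) * ‖w‖ / (2 * √α) := by
    rw [le_div_iff₀ (by positivity)]
    nlinarith [neg_le_of_abs_le (abs_real_inner_le_norm (S (adjoint A e)) w), norm_nonneg w]
  have hsource_w : -(α * ⟪S ((adjoint B * B) v), w⟫) ≤ α * ‖v‖ * ‖w‖ + ‖w‖ ^ 2 / 2 := by
    nlinarith [neg_le_of_abs_le (abs_real_inner_le_norm (S ((adjoint B * B) v)) w),
      norm_nonneg w, mul_le_mul_of_nonneg_right hv (sq_nonneg ‖w‖)]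
  have hsplit : (M₂ / 2 * ‖w‖ ^ 2 + δ) * ‖w‖ / (2 * √α)
      = M₂ / 4 * ‖w‖ ^ 3 / √α + δ * ‖w‖ / (2 * √α) := by
    field_simp; ring
  linarith

end Tikhonov

theorem stmt_11_general {H : Type*} [NormedAddCommGroup H] [InnerProductSpace ℝ H]
    [CompleteSpace H] (u₀ : H) (R M₁ M₂ : ℝ)
    (F : H → H) (F' : H → H →L[ℝ] H) (F'' : H → H →L[ℝ] H →L[ℝ] H)
    (hF' : ∀ x ∈ closedBall u₀ R, HasFDerivAt F (F' x) x)
    (hF'' : ∀ x ∈ closedBall u₀ R, HasFDerivAt F' (F'' x) x)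
    (hM₁bd : ∀ x ∈ closedBall u₀ R, ‖F' x‖ ≤ M₁)
    (hM₂bd : ∀ x ∈ closedBall u₀ R, ‖F'' x‖ ≤ M₂)
    (y : H) (hy : y ∈ closedBall u₀ R)
    (δ : ℝ) (fδ : H) (hfδ : ‖fδ - F y‖ ≤ δ)
    (v : H) (hv : 2 * M₁ * M₂ * ‖v‖ ≤ 1 / 2)
    (z : H) (hz : z = y - (ContinuousLinearMap.adjoint (F' y) * F' y) v)
    (a : ℝ → ℝ) (ha : ∀ t : ℝ, 0 ≤ t → 0 < a t)
    (u u' : ℝ → H)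
    (hode : ∀ t : ℝ, 0 ≤ t → u t ∈ closedBall u₀ R →
      u' t = -(Ring.inverse (ContinuousLinearMap.adjoint (F' (u t)) * F' (u t)
            + a t • (1 : H →L[ℝ] H)))
          (ContinuousLinearMap.adjoint (F' (u t)) (F (u t) - fδ)
            + a t • (u t - z))) :
    ∀ t : ℝ, 0 ≤ t → u t ∈ closedBall u₀ R →
      ⟪u' t, u t - y⟫ ≤ -‖u t - y‖ ^ 2 / 2
        + (M₂ / 4) * ‖u t - y‖ ^ 3 / Real.sqrt (a t)
        + a t * ‖v‖ * ‖u t - y‖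
        + δ * ‖u t - y‖ / (2 * Real.sqrt (a t)) := by
  intro t ht hmem
  have hlip : ∀ x ∈ closedBall u₀ R, ∀ x' ∈ closedBall u₀ R, ‖F' x - F' x'‖ ≤ M₂ * ‖x - x'‖ :=
    fun x hx x' hx' => (convex_closedBall u₀ R).norm_image_sub_le_of_norm_hasFDerivWithin_le
      (fun p hp => (hF'' p hp).hasFDerivWithinAt) hM₂bd hx' hx
  have htaylor := (convex_closedBall u₀ R).norm_sub_sub_fderiv_le_of_lipschitz hF' hlip hmem hy
  set A := F' (u t)
  set w := u t - y
  have hremainder : ‖F (u t) - fδ - A w‖ ≤ M₂ / 2 * ‖w‖ ^ 2 + δ := by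
    have hsplit : F (u t) - fδ - A w = -(F y - F (u t) - A (y - u t)) - (fδ - F y) := by
      rw [map_sub, map_sub]; abel
    rw [hsplit]
    refine (norm_sub_le _ _).trans (add_le_add ?_ hfδ)
    rw [norm_neg]; rwa [norm_sub_rev y] at htaylor
  have hrhs : adjoint A (F (u t) - fδ) + a t • (u t - z)
      = tikhonovOp A (a t) w + adjoint A (F (u t) - fδ - A w)
        + a t • (adjoint (F' y) * F' y) v := by
    rw [hz, tikhonovOp_apply]; simp only [w, map_sub]; module
  rw [hode t ht hmem, hrhs]
  exact inner_neg_ringInverse_tikhonovOp_le (ha t ht) (hM₁bd _ hmem) (hM₁bd y hy)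
    (by simpa only [norm_sub_rev y] using hlip y hy _ hmem) hremainder hv

/-- Differential inequality (18) in the proof of Theorem 3 (Ramm, DSM): for
noisy data `f_δ` with `‖f_δ − F(y)‖ ≤ δ`, along a trajectory of
`u_δ' = -(T + aI)⁻¹[A*(F(u_δ) − f_δ) + a(u_δ − z)]`, with `A := F'(u_δ(t))`,
`T := A*A`, `z := y − F'(y)*F'(y) v`, `2M₁M₂‖v‖ ≤ 1/2`, one has, with
`w := u_δ − y` and `c₀ := M₂/4`,
`⟨u_δ', w⟩ ≤ -‖w‖²/2 + c₀‖w‖³/√a + a‖v‖‖w‖ + δ‖w‖/(2√a)`. -/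
theorem stmt_11 {H : Type*} [NormedAddCommGroup H] [InnerProductSpace ℝ H]
    [CompleteSpace H] (u₀ : H) (R M₁ M₂ : ℝ) (hR : 0 < R)
    (hM₁ : 0 < M₁) (hM₂ : 0 < M₂)
    (F : H → H) (F' : H → H →L[ℝ] H) (F'' : H → H →L[ℝ] H →L[ℝ] H)
    (hF' : ∀ x ∈ closedBall u₀ R, HasFDerivAt F (F' x) x)
    (hF'' : ∀ x ∈ closedBall u₀ R, HasFDerivAt F' (F'' x) x)
    (hF''cont : ContinuousOn F'' (closedBall u₀ R))
    (hM₁bd : ∀ x ∈ closedBall u₀ R, ‖F' x‖ ≤ M₁)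
    (hM₂bd : ∀ x ∈ closedBall u₀ R, ‖F'' x‖ ≤ M₂)
    (y : H) (hy : y ∈ closedBall u₀ R)
    (δ : ℝ) (hδ : 0 < δ) (fδ : H) (hfδ : ‖fδ - F y‖ ≤ δ)
    (v : H) (hv : 2 * M₁ * M₂ * ‖v‖ ≤ 1 / 2)
    (z : H) (hz : z = y - (ContinuousLinearMap.adjoint (F' y) * F' y) v)
    (a : ℝ → ℝ) (ha : ∀ t : ℝ, 0 ≤ t → 0 < a t)
    (u u' : ℝ → H)
    (hu : ∀ t : ℝ, 0 ≤ t → HasDerivAt u (u' t) t)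
    (hode : ∀ t : ℝ, 0 ≤ t → u t ∈ closedBall u₀ R →
      u' t = -(Ring.inverse (ContinuousLinearMap.adjoint (F' (u t)) * F' (u t)
            + a t • (1 : H →L[ℝ] H)))
          (ContinuousLinearMap.adjoint (F' (u t)) (F (u t) - fδ)
            + a t • (u t - z))) :
    ∀ t : ℝ, 0 ≤ t → u t ∈ closedBall u₀ R →
      ⟪u' t, u t - y⟫ ≤ -‖u t - y‖ ^ 2 / 2
        + (M₂ / 4) * ‖u t - y‖ ^ 3 / Real.sqrt (a t)
        + a t * ‖v‖ * ‖u t - y‖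
        + δ * ‖u t - y‖ / (2 * Real.sqrt (a t)) :=
  stmt_11_general u₀ R M₁ M₂ F F' F'' hF' hF'' hM₁bd hM₂bd y hy δ fδ hfδ v hv z hz a ha u u' hode
end
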